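/- arXiv:2303.05010 — 4 statements merged into one kernel-verified Lean document; each statement's English description precedes it below -/
import Mathlib

section
/- The images in Λ/R of the elements W_k for integers k ≥ 4 are linearly independent over ℚ. -/
/-- The group algebra `Λ = ℚ[ℤ²]`, with basis the monomials `t₁^a t₃^b` for `(a,b) ∈ ℤ²`. -/
abbrev Lam : Type := AddMonoidAlgebra ℚ (ℤ × ℤ)

/-- The monomial `t₁^a t₃^b ∈ Λ`. -/
noncomputable def mono (a b : ℤ) : Lam := AddMonoidAlgebra.single (a, b) (1 : ℚ)

/-- The hexagon relator
`h_{α,β} = t₁^{α−β} t₃^{−β} − t₁^{α} t₃^{α−β} + ε·(t₁^{β} t₃^{β−α} − t₁^{β−α} t₃^{−α})`. -/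
noncomputable def hex (ε : ℚ) (α β : ℤ) : Lam :=
  mono (α - β) (-β) - mono α (α - β) + ε • (mono β (β - α) - mono (β - α) (-α))

/-- `R`, the ℚ-linear span of the hexagon relators. -/
noncomputable def hexRel (ε : ℚ) : Submodule ℚ Lam :=
  Submodule.span ℚ {h : Lam | ∃ α β : ℤ, h = hex ε α β}

/-- The element `W_k ∈ Λ`. -/
noncomputable def W (ε : ℚ) (k : ℤ) : Lam :=
  ((k : ℚ) - 1) • (mono (-1) (1 - k) + ε • mono (1 - k) (-1)
      - mono (2 - k) 1 - ε • mono 1 (2 - k))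
    + mono 1 (k - 1) + ε • mono (k - 1) 1
    - mono (1 - k) (2 - k) - ε • mono (2 - k) (1 - k)

/-!
Let `τ` be the involution `t₁^a t₃^b ↦ t₁^{-b} t₃^{-a}` of `Λ`. Every hexagon relator is
`(1 + ετ)` applied to a difference of two monomials, and `(1 - ετ)(1 + ετ) = 1 - ε²τ² = 0`,
so `1 - ετ` kills `R`. After applying `1 - ετ`, the coefficients of `t₁^{j-1} t₃^{j-2}`,
`j ≥ 4`, are functionals on `Λ/R` dual to the `W_k`: in `W_k` only the term
`-ε t₁^{2-k} t₃^{1-k}` is sent onto one of these monomials, namely onto `ε² t₁^{k-1} t₃^{k-2}`.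
-/

open AddMonoidAlgebra

noncomputable def negSwap : Module.End ℚ Lam :=
  mapDomainLinearMap ℚ ℚ fun p : ℤ × ℤ => (-p.2, -p.1)

lemma negSwap_mono (a b : ℤ) : negSwap (mono a b) = mono (-b) (-a) :=
  mapDomainLinearMap_single _ _ _

lemma negSwap_mul_self : negSwap * negSwap = 1 := by
  ext p : 2
  simp [negSwap]

lemma hex_eq_add_smul_negSwap (ε : ℚ) (α β : ℤ) :
    hex ε α β = (1 + ε • negSwap) (mono (α - β) (-β) - mono α (α - β)) := by
  simp only [hex, LinearMap.add_apply, Module.End.one_apply, LinearMap.smul_apply, map_sub,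
    negSwap_mono, neg_neg, neg_sub, smul_sub]
  abel

lemma sub_smul_negSwap_mul_add {ε : ℚ} (hε : ε * ε = 1) :
    (1 - ε • negSwap) * (1 + ε • negSwap) = 0 := by
  rw [sub_mul, one_mul, mul_add, mul_one, smul_mul_smul_comm, negSwap_mul_self, hε, one_smul]
  abel

lemma hexRel_le_ker {ε : ℚ} (hε : ε * ε = 1) : hexRel ε ≤ LinearMap.ker (1 - ε • negSwap) := by
  rw [hexRel, Submodule.span_le]
  rintro _ ⟨α, β, rfl⟩
  rw [SetLike.mem_coe, LinearMap.mem_ker, hex_eq_add_smul_negSwap, ← Module.End.mul_apply,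
    sub_smul_negSwap_mul_add hε, LinearMap.zero_apply]

lemma coeff_sub_smul_negSwap_mono (ε : ℚ) (a b : ℤ) (p : ℤ × ℤ) :
    ((1 - ε • negSwap) (mono a b)).coeff p =
      (if (a, b) = p then 1 else 0) - ε * (if (-b, -a) = p then 1 else 0) := by
  simp only [LinearMap.sub_apply, Module.End.one_apply, LinearMap.smul_apply, negSwap_mono]
  simp [mono, Finsupp.single_apply]

noncomputable def subdiagCoeffs : Lam →ₗ[ℚ] ({k : ℤ // 4 ≤ k} → ℚ) :=
  LinearMap.pi fun k => Finsupp.lapply (k.1 - 1, k.1 - 2) ∘ₗ (coeffLinearEquiv ℚ).toLinearMap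

lemma subdiagCoeffs_apply (x : Lam) (k : {k : ℤ // 4 ≤ k}) :
    subdiagCoeffs x k = x.coeff (k.1 - 1, k.1 - 2) := rfl

lemma subdiagCoeffs_W {ε : ℚ} (hε : ε * ε = 1) (k : {k : ℤ // 4 ≤ k}) :
    subdiagCoeffs ((1 - ε • negSwap) (W ε k)) = Pi.single k 1 := by
  obtain ⟨k, hk⟩ := k
  ext ⟨j, hj⟩
  simp only [subdiagCoeffs_apply, W, map_add, map_sub, map_smul, coeff_add, coeff_sub, coeff_smul,
    Finsupp.coe_add, Finsupp.coe_sub, Finsupp.coe_smul, Pi.add_apply, Pi.sub_apply, Pi.smul_apply,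
    smul_eq_mul, coeff_sub_smul_negSwap_mono, Prod.mk.injEq]
  rcases eq_or_ne j k with rfl | hjk
  · simp (disch := omega) only [if_pos, if_neg, Pi.single_eq_same]
    linear_combination hε
  · simp (disch := omega) only [if_neg]
    rw [Pi.single_eq_of_ne (by simpa using hjk)]
    ring

/-- The images in `Λ/R` of the elements `W_k`, `k ≥ 4`, are linearly independent over `ℚ`. -/
theorem W_images_linearIndependent (ε : ℚ) (hε : ε = 1 ∨ ε = -1) :
    LinearIndependent ℚ (fun k : {k : ℤ // 4 ≤ k} => (hexRel ε).mkQ (W ε k.1)) := by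
  have hε2 : ε * ε = 1 := by rcases hε with rfl | rfl <;> norm_num
  let coords := (hexRel ε).liftQ (subdiagCoeffs ∘ₗ (1 - ε • negSwap))
    ((hexRel_le_ker hε2).trans (LinearMap.ker_le_ker_comp _ _))
  refine LinearIndependent.of_comp coords ?_
  have coords_W : coords ∘ (fun k => (hexRel ε).mkQ (W ε k.1)) = fun k => Pi.single k 1 :=
    funext (subdiagCoeffs_W hε2)
  rw [coords_W]
  exact Pi.linearIndependent_single_one _ ℚ
end

section
/- The quotient ℚ-vector space Λ/R is infinite-dimensional over ℚ; in particular it is not finitely generated as a ℚ-module. -/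
/-! Each relator `h_{α,β}` is a combination of differences `t^p - t^{σ p}` for the order-six
rotation `σ (a, b) = (b, b - a)` of the hexagonal lattice `ℤ²`. Hence pushing monomials forward
along any `σ`-invariant map kills `R`. The Eisenstein norm `a² - ab + b²` is such a map, and it
sends the monomials `t₁ⁿ` to the linearly independent elements `single (n²) 1`, so their classes
in `Λ/R` are linearly independent. -/

noncomputable def pushMono {T : Type*} (f : ℤ × ℤ → T) : Lam →ₗ[ℚ] (T →₀ ℚ) :=
  Finsupp.lmapDomain ℚ ℚ f ∘ₗ (AddMonoidAlgebra.coeffLinearEquiv ℚ).toLinearMap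

lemma pushMono_mono {T : Type*} (f : ℤ × ℤ → T) (a b : ℤ) :
    pushMono f (mono a b) = Finsupp.single (f (a, b)) 1 :=
  Finsupp.mapDomain_single

lemma pushMono_hex {T : Type*} (f : ℤ × ℤ → T) (hf : ∀ a b : ℤ, f (b, b - a) = f (a, b))
    (ε : ℚ) (α β : ℤ) : pushMono f (hex ε α β) = 0 := by
  have hα := hf α (α - β)
  have hβ := hf β (β - α)
  rw [show α - β - α = -β by ring] at hα
  rw [show β - α - β = -α by ring] at hβ
  simp only [hex, map_add, map_sub, map_smul, pushMono_mono, hα, hβ, sub_self, smul_zero,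
    add_zero]

lemma hexRel_le_ker_pushMono {T : Type*} (f : ℤ × ℤ → T)
    (hf : ∀ a b : ℤ, f (b, b - a) = f (a, b)) (ε : ℚ) :
    hexRel ε ≤ LinearMap.ker (pushMono f) := by
  rw [hexRel, Submodule.span_le]
  rintro x ⟨α, β, rfl⟩
  exact pushMono_hex f hf ε α β

def eisensteinNorm (p : ℤ × ℤ) : ℤ := p.1 ^ 2 - p.1 * p.2 + p.2 ^ 2

lemma eisensteinNorm_rotate (a b : ℤ) : eisensteinNorm (b, b - a) = eisensteinNorm (a, b) := by
  simp only [eisensteinNorm]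
  ring

lemma linearIndependent_mk_mono (ε : ℚ) :
    LinearIndependent ℚ (fun n : ℕ => Submodule.Quotient.mk (mono n 0) : ℕ → Lam ⧸ hexRel ε) := by
  let Ψ := (hexRel ε).liftQ (pushMono eisensteinNorm)
    (hexRel_le_ker_pushMono eisensteinNorm eisensteinNorm_rotate ε)
  have hsq : Function.Injective (fun n : ℕ => ((n : ℤ) ^ 2)) := fun m n h => by
    simpa using h
  have hΨ : Ψ ∘ (fun n : ℕ => Submodule.Quotient.mk (mono n 0)) =
      (fun k : ℤ => Finsupp.single k (1 : ℚ)) ∘ (fun n : ℕ => (n : ℤ) ^ 2) := by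
    funext n
    simp [Ψ, pushMono_mono, eisensteinNorm]
  refine LinearIndependent.of_comp Ψ ?_
  rw [hΨ]
  exact (Finsupp.linearIndependent_single_one ℚ ℤ).comp _ hsq

theorem quotient_not_finiteDimensional_general (ε : ℚ) :
    ¬ Module.Finite ℚ (Lam ⧸ hexRel ε) :=
  fun _ => Module.Finite.not_linearIndependent_of_infinite _ (linearIndependent_mk_mono ε)

/-- The quotient `Λ/R` is infinite-dimensional over `ℚ`; in particular it is not
finitely generated as a `ℚ`-module. -/
theorem quotient_not_finiteDimensional (ε : ℚ) (hε : ε = 1 ∨ ε = -1) :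
    ¬ Module.Finite ℚ (Lam ⧸ hexRel ε) :=
  quotient_not_finiteDimensional_general ε
end

section
/- For all α, β ∈ ℤ, the images in Λ/R of the following six elements of Λ all coincide: t₁^{α} t₃^{β} + ε·t₁^{−β} t₃^{−α}; t₁^{α−β} t₃^{α} + ε·t₁^{−α} t₃^{β−α}; t₁^{−β} t₃^{α−β} + ε·t₁^{β−α} t₃^{β}; t₁^{−α} t₃^{−β} + ε·t₁^{β} t₃^{α}; t₁^{β−α} t₃^{−α} + ε·t₁^{α} t₃^{α−β}; t₁^{β} t₃^{β−α} + ε·t₁^{α−β} t₃^{−β}. -/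
lemma hex_eq_sub_rotate (ε : ℚ) (a b : ℤ) :
    hex ε (a - b) (-b) =
      (mono a b + ε • mono (-b) (-a)) - (mono (a - b) a + ε • mono (-a) (b - a)) := by
  rw [hex]
  ring_nf
  module

lemma mkQ_hexRel_rotate (ε : ℚ) (a b : ℤ) :
    (hexRel ε).mkQ (mono a b + ε • mono (-b) (-a))
      = (hexRel ε).mkQ (mono (a - b) a + ε • mono (-a) (b - a)) := by
  refine (Submodule.Quotient.eq _).2 ?_
  rw [← hex_eq_sub_rotate]
  exact Submodule.subset_span ⟨_, _, rfl⟩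

theorem hexagon_orbit_eq_general (ε : ℚ) (α β : ℤ) :
    (hexRel ε).mkQ (mono α β + ε • mono (-β) (-α))
        = (hexRel ε).mkQ (mono (α - β) α + ε • mono (-α) (β - α)) ∧
    (hexRel ε).mkQ (mono (α - β) α + ε • mono (-α) (β - α))
        = (hexRel ε).mkQ (mono (-β) (α - β) + ε • mono (β - α) β) ∧
    (hexRel ε).mkQ (mono (-β) (α - β) + ε • mono (β - α) β)
        = (hexRel ε).mkQ (mono (-α) (-β) + ε • mono β α) ∧
    (hexRel ε).mkQ (mono (-α) (-β) + ε • mono β α)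
        = (hexRel ε).mkQ (mono (β - α) (-α) + ε • mono α (α - β)) ∧
    (hexRel ε).mkQ (mono (β - α) (-α) + ε • mono α (α - β))
        = (hexRel ε).mkQ (mono β (β - α) + ε • mono (α - β) (-β)) := by
  refine ⟨mkQ_hexRel_rotate ε α β, ?_, ?_, ?_, ?_⟩
  · convert mkQ_hexRel_rotate ε (α - β) α using 2 <;> ring_nf
  · convert mkQ_hexRel_rotate ε (-β) (α - β) using 2 <;> ring_nf
  · convert mkQ_hexRel_rotate ε (-α) (-β) using 2 <;> ring_nf
  · convert mkQ_hexRel_rotate ε (β - α) (-α) using 2 <;> ring_nf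

/-- In `Λ/R`, for all `α, β ∈ ℤ`, the images of the six elements
`t₁^{α} t₃^{β} + ε·t₁^{−β} t₃^{−α}`, `t₁^{α−β} t₃^{α} + ε·t₁^{−α} t₃^{β−α}`,
`t₁^{−β} t₃^{α−β} + ε·t₁^{β−α} t₃^{β}`, `t₁^{−α} t₃^{−β} + ε·t₁^{β} t₃^{α}`,
`t₁^{β−α} t₃^{−α} + ε·t₁^{α} t₃^{α−β}`, `t₁^{β} t₃^{β−α} + ε·t₁^{α−β} t₃^{−β}`
all coincide. -/
theorem hexagon_orbit_eq (ε : ℚ) (hε : ε = 1 ∨ ε = -1) (α β : ℤ) :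
    (hexRel ε).mkQ (mono α β + ε • mono (-β) (-α))
        = (hexRel ε).mkQ (mono (α - β) α + ε • mono (-α) (β - α)) ∧
    (hexRel ε).mkQ (mono (α - β) α + ε • mono (-α) (β - α))
        = (hexRel ε).mkQ (mono (-β) (α - β) + ε • mono (β - α) β) ∧
    (hexRel ε).mkQ (mono (-β) (α - β) + ε • mono (β - α) β)
        = (hexRel ε).mkQ (mono (-α) (-β) + ε • mono β α) ∧
    (hexRel ε).mkQ (mono (-α) (-β) + ε • mono β α)
        = (hexRel ε).mkQ (mono (β - α) (-α) + ε • mono α (α - β)) ∧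
    (hexRel ε).mkQ (mono (β - α) (-α) + ε • mono α (α - β))
        = (hexRel ε).mkQ (mono β (β - α) + ε • mono (α - β) (-β)) :=
  hexagon_orbit_eq_general ε α β
end

section
/- If ε = 1 (the case n even), then the image of W₃ in Λ/R is zero, i.e. W₃ = 2·(t₁^{−1} t₃^{−2} + t₁^{−2} t₃^{−1} − t₁^{−1} t₃ − t₁ t₃^{−1}) + t₁ t₃² + t₁² t₃ − t₁^{−2} t₃^{−1} − t₁^{−1} t₃^{−2} lies in R. -/
theorem hex_mem_hexRel (ε : ℚ) (α β : ℤ) : hex ε α β ∈ hexRel ε :=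
  Submodule.subset_span ⟨α, β, rfl⟩

theorem W_three (ε : ℚ) :
    W ε 3 = (2 : ℚ) • (mono (-1) (-2) + ε • mono (-2) (-1) - mono (-1) 1 - ε • mono 1 (-1))
        + mono 1 2 + ε • mono 2 1 - mono (-2) (-1) - ε • mono (-1) (-2) := by
  simp only [W]
  norm_num

/-- The two relators are `t₁⁻¹t₃⁻² − 2t₁t₃⁻¹ + t₁²t₃` and `2t₁⁻¹t₃ − t₁⁻²t₃⁻¹ − t₁t₃²`. -/
theorem W_one_three_eq_hex_sub_hex : W 1 3 = hex 1 1 2 - hex 1 (-2) (-1) := by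
  rw [W_three]
  simp only [hex]
  norm_num
  module

/-- For `ε = 1` (the case `n` even), the image of `W₃` in `Λ/R` is zero, i.e.
`W₃ = 2·(t₁^{−1}t₃^{−2} + t₁^{−2}t₃^{−1} − t₁^{−1}t₃ − t₁t₃^{−1}) + t₁t₃² + t₁²t₃
 − t₁^{−2}t₃^{−1} − t₁^{−1}t₃^{−2}` lies in `R`. -/
theorem W3_eps_one_in_R :
    W 1 3 = (2 : ℚ) • (mono (-1) (-2) + mono (-2) (-1) - mono (-1) 1 - mono 1 (-1))
        + mono 1 2 + mono 2 1 - mono (-2) (-1) - mono (-1) (-2) ∧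
    W 1 3 ∈ hexRel 1 := by
  refine ⟨by simpa only [one_smul] using W_three 1, ?_⟩
  rw [W_one_three_eq_hex_sub_hex]
  exact sub_mem (hex_mem_hexRel 1 1 2) (hex_mem_hexRel 1 (-2) (-1))
end
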